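/- arXiv:math/0703045 — 3 statements merged into one kernel-verified Lean document; each statement's English description precedes it below -/
import Mathlib

section
/- Let n < ω and let H be a subgroup of G of bounded index (i.e. (G:H) < κ̄). Suppose ā ∈ ^α𝔠 (α < κ̄) contains representatives of every left H-coset and Rang(ā) ⊇ A*, and Rang(ā) = M ≺ 𝔠. If p(x) ⊇ p*(x) is a 1-type over M with p(𝔠) = H, then q^n_{ā}(x) ⊢ p(x). -/
open FirstOrder Cardinal Set

universe u

namespace Paper886

section Basic

variable (L : FirstOrder.Language.{u, u}) (M : Type u) [L.Structure M]

/-- A first-order formula in `n` object variables together with a finite tuple of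
parameters from `M`. -/
structure ParamFormula (n : ℕ) : Type u where
  m : ℕ
  toFormula : L.Formula (Fin n ⊕ Fin m)
  params : Fin m → M

variable {L M}

/-- Realization of a parametrized formula at a tuple. -/
def ParamFormula.Realize {n : ℕ} (f : ParamFormula L M n) (v : Fin n → M) : Prop :=
  f.toFormula.Realize (Sum.elim v f.params)

/-- The parameters of `f` all lie in `B`. -/
def ParamFormula.paramsIn {n : ℕ} (f : ParamFormula L M n) (B : Set M) : Prop :=
  ∀ i, f.params i ∈ B

/-- The set of realizations of a partial 1-type. -/
def realizeSet (p : Set (ParamFormula L M 1)) : Set M :=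
  {a | ∀ f ∈ p, f.Realize fun _ => a}

/-- The partial type `p` is over the parameter set `B`. -/
def IsTypeOver (p : Set (ParamFormula L M 1)) (B : Set M) : Prop :=
  ∀ f ∈ p, f.paramsIn B

variable (L) in
/-- Two tuples realize the same type over a set `A` of parameters. -/
def SameType {α : Type u} (A : Set M) (a b : α → M) : Prop :=
  ∀ (n mp : ℕ) (φ : L.Formula (Fin n ⊕ Fin mp)) (vs : Fin n → α) (ps : Fin mp → M),
    (∀ i, ps i ∈ A) →
      (φ.Realize (Sum.elim (fun i => a (vs i)) ps) ↔ φ.Realize (Sum.elim (fun i => b (vs i)) ps))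

variable (L M)

/-- `M` is `κ`-saturated: every finitely satisfiable 1-type over fewer than `κ`
parameters is realized in `M`. -/
def Saturated (κ : Cardinal.{u}) : Prop :=
  ∀ B : Set M, #B < κ → ∀ p : Set (ParamFormula L M 1), IsTypeOver p B →
    (∀ s : Set (ParamFormula L M 1), s ⊆ p → s.Finite → ∃ a : M, ∀ f ∈ s, f.Realize fun _ => a) →
    ∃ a : M, a ∈ realizeSet p

/-- `Th(M)` is dependent (NIP): no formula has the independence property, where consistency
of a pattern is rendered as finite satisfiability in the (saturated) monster. -/
def IsDependent : Prop :=
  ∀ (nx np : ℕ) (φ : L.Formula (Fin nx ⊕ Fin np)) (a : ℕ → Fin np → M),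
    ¬ ∀ (u : Set ℕ) (s : Finset ℕ), ∃ x : Fin nx → M,
        ∀ i ∈ s, (φ.Realize (Sum.elim x (a i)) ↔ i ∈ u)

variable {L M}

/-- The cardinality `|T|` of the (complete) theory of `M`. -/
noncomputable def theoryCard (L : FirstOrder.Language.{u, u}) : Cardinal.{u} :=
  ℵ₀ ⊔ L.card

variable (L M)

/-- A type-definable group: a partial type `p*` over `A*` together with definitions
(over `A*`) of the group operations making `p*(𝔠)` a group. -/
structure DefGroup : Type u where
  AStar : Set M
  pStar : Set (ParamFormula L M 1)
  pStar_over : IsTypeOver pStar AStar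
  mul : M → M → M
  inv : M → M
  one : M
  mul_definable : ∃ φ : ParamFormula L M 3, φ.paramsIn AStar ∧
    ∀ x y z : M, (φ.Realize ![x, y, z] ↔ mul x y = z)
  inv_definable : ∃ φ : ParamFormula L M 2, φ.paramsIn AStar ∧
    ∀ x y : M, (φ.Realize ![x, y] ↔ inv x = y)
  one_definable : ∃ φ : ParamFormula L M 1, φ.paramsIn AStar ∧
    ∀ x : M, (φ.Realize ![x] ↔ x = one)
  one_mem' : one ∈ realizeSet pStar
  mul_mem' : ∀ x ∈ realizeSet pStar, ∀ y ∈ realizeSet pStar, mul x y ∈ realizeSet pStar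
  inv_mem' : ∀ x ∈ realizeSet pStar, inv x ∈ realizeSet pStar
  mul_assoc' : ∀ x ∈ realizeSet pStar, ∀ y ∈ realizeSet pStar, ∀ z ∈ realizeSet pStar,
    mul (mul x y) z = mul x (mul y z)
  one_mul' : ∀ x ∈ realizeSet pStar, mul one x = x
  mul_one' : ∀ x ∈ realizeSet pStar, mul x one = x
  inv_mul' : ∀ x ∈ realizeSet pStar, mul (inv x) x = one
  mul_inv' : ∀ x ∈ realizeSet pStar, mul x (inv x) = one

variable {L M}

namespace DefGroup

variable (D : DefGroup L M)

/-- The underlying set of the group `G = p*(𝔠)`. -/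
def carrier : Set M := realizeSet D.pStar

/-- `G` is abelian. -/
def IsAbelian : Prop := ∀ x ∈ D.carrier, ∀ y ∈ D.carrier, D.mul x y = D.mul y x

/-- `H` is a subgroup of `G`. -/
def IsSubgroup (H : Set M) : Prop :=
  H ⊆ D.carrier ∧ D.one ∈ H ∧ (∀ x ∈ H, ∀ y ∈ H, D.mul x y ∈ H) ∧ ∀ x ∈ H, D.inv x ∈ H

/-- `(G : H) ≤ c`: at most `c` left cosets of `H` cover `G`. -/
def indexLE (H : Set M) (c : Cardinal.{u}) : Prop :=
  ∃ S : Set M, S ⊆ D.carrier ∧ #S ≤ c ∧ ∀ g ∈ D.carrier, ∃ s ∈ S, D.mul (D.inv s) g ∈ H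

/-- `(G : H) < c`: fewer than `c` left cosets of `H` cover `G`. -/
def indexLT (H : Set M) (c : Cardinal.{u}) : Prop :=
  ∃ S : Set M, S ⊆ D.carrier ∧ #S < c ∧ ∀ g ∈ D.carrier, ∃ s ∈ S, D.mul (D.inv s) g ∈ H

/-- The realization set of the partial type `q^n_Γ`. -/
def qSet (Γ : Set (ParamFormula L M 1)) (n : ℕ) : Set M :=
  {c | ∃ d : Fin n → M × M,
    (∀ ℓ, (d ℓ).1 ∈ D.carrier ∧ (d ℓ).2 ∈ D.carrier) ∧
    (∀ ℓ, ∀ f ∈ Γ, (f.Realize fun _ => (d ℓ).1) ↔ (f.Realize fun _ => (d ℓ).2)) ∧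
    c = (List.ofFn fun ℓ => D.mul (D.inv (d ℓ).1) (d ℓ).2).foldr D.mul D.one}

/-- The realization set of `q^n_{ā}`, i.e. `q^n_{Γ_ā}` where `Γ_ā` consists of all
formulas with parameters in the range of `ā`. -/
def qTupleSet {α : Type u} (a : α → M) (n : ℕ) : Set M :=
  D.qSet {f : ParamFormula L M 1 | f.paramsIn (Set.range a)} n

end DefGroup

end Basic

variable {L : FirstOrder.Language.{u, u}} {M : Type u} [L.Structure M]

variable (L) in
/-- `X` is the union of fewer than `κ` realization sets of types over `B`. -/
def UnionTypeDefOver (X B : Set M) (κ : Cardinal.{u}) : Prop :=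
  ∃ ι : Type u, #ι < κ ∧ ∃ P : ι → Set (ParamFormula L M 1),
    (∀ i, IsTypeOver (P i) B) ∧ X = ⋃ i, realizeSet (P i)

variable (L) in
/-- `X` is union-type-definable (with fewer than `κ` parameters altogether). -/
def UnionTypeDefinable (X : Set M) (κ : Cardinal.{u}) : Prop :=
  ∃ B : Set M, #B < κ ∧ UnionTypeDefOver L X B κ

/-- `G_q = (p* ∪ q)(𝔠)`. -/
def Gq (D : DefGroup L M) (q : Set (ParamFormula L M 1)) : Set M :=
  realizeSet (D.pStar ∪ q)

/-- `R_B`: the family of 1-types `q` over `B` such that `G_q` is a subgroup of `G`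
of index `< κ`. -/
def RB (D : DefGroup L M) (κ : Cardinal.{u}) (B : Set M) : Set (Set (ParamFormula L M 1)) :=
  {q | IsTypeOver q B ∧ D.IsSubgroup (Gq D q) ∧ D.indexLT (Gq D q) κ}

/-- `q_B`, the union of all members of `R_B`. -/
def qB (D : DefGroup L M) (κ : Cardinal.{u}) (B : Set M) : Set (ParamFormula L M 1) :=
  ⋃₀ RB D κ B

/-- `G_B = q_B(𝔠) ∩ G`. -/
def GB (D : DefGroup L M) (κ : Cardinal.{u}) (B : Set M) : Set M :=
  realizeSet (qB D κ B) ∩ D.carrier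

/-- The complete type of `a` over `A` (as the set of all param-formulas over `A`
satisfied by `a`). -/
def typeOf (A : Set M) (a : M) : Set (ParamFormula L M 1) :=
  {f | f.paramsIn A ∧ f.Realize fun _ => a}

/-- `φ(x̄, ȳ₀, …, ȳ_{k-1})` is `k`-independent: for every index set of size `< κ` there is
an array of parameter tuples such that every pattern on `^k ι` is (finitely) satisfiable. -/
def FormulaKIndep (M : Type u) [L.Structure M] (κ : Cardinal.{u}) (k nx : ℕ) (ny : Fin k → ℕ)
    (φ : L.Formula (Fin nx ⊕ ((ℓ : Fin k) × Fin (ny ℓ)))) : Prop :=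
  ∀ ι : Type u, #ι < κ →
    ∃ a : (ℓ : Fin k) → ι → Fin (ny ℓ) → M,
      ∀ (u : Set (Fin k → ι)) (s : Finset (Fin k → ι)),
        ∃ x : Fin nx → M,
          ∀ η ∈ s, ((φ.Realize (Sum.elim x fun p => a p.1 (η p.1) p.2)) ↔ η ∈ u)

/-- `Th(M)` is `k`-independent. -/
def KIndependent (L : FirstOrder.Language.{u, u}) (M : Type u) [L.Structure M] (κ : Cardinal.{u})
    (k : ℕ) : Prop :=
  ∃ (nx : ℕ) (ny : Fin k → ℕ) (φ : L.Formula (Fin nx ⊕ ((ℓ : Fin k) × Fin (ny ℓ)))),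
    FormulaKIndep M κ k nx ny φ

/-- `Th(M)` is `k`-dependent. -/
def KDependent (L : FirstOrder.Language.{u, u}) (M : Type u) [L.Structure M] (κ : Cardinal.{u})
    (k : ℕ) : Prop :=
  ¬ KIndependent L M κ k

/-! Write a factor of an element of `q^n_ā` as `d₁⁻¹d₂` with `d₁, d₂ ∈ G` of the same type over
`ā`, and pick a coset representative `s` in `ā` with `s⁻¹d₁ ∈ H`. Since the group operations are
definable over `A* ⊆ Rang(ā)`, the partial type `p(s⁻¹x)` is again over `Rang(ā)`; `d₁` realizes
it, hence so does `d₂`, i.e. `s⁻¹d₂ ∈ H`. Thus `d₁⁻¹d₂ = (s⁻¹d₁)⁻¹(s⁻¹d₂) ∈ H`, and `H = p(𝔠)` is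
closed under the products forming `q^n_ā`. -/

theorem _root_.Matrix.comp_vecCons {α β : Type*} {n : ℕ} (g : α → β) (a : α) (v : Fin n → α) :
    g ∘ Matrix.vecCons a v = Matrix.vecCons (g a) (g ∘ v) :=
  Fin.comp_cons g a v

namespace ParamFormula

variable {n k : ℕ}

def comap (φ : ParamFormula L M n) (σ : Fin n → Fin k) : ParamFormula L M k :=
  ⟨φ.m, φ.toFormula.relabel (Sum.map σ id), φ.params⟩

@[simp]
theorem realize_comap (φ : ParamFormula L M n) (σ : Fin n → Fin k) (v : Fin k → M) :
    (φ.comap σ).Realize v ↔ φ.Realize (v ∘ σ) := by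
  simp only [comap, Realize, Language.Formula.realize_relabel, Sum.elim_comp_map,
    Function.comp_id]

def inf (φ ψ : ParamFormula L M n) : ParamFormula L M n :=
  ⟨φ.m + ψ.m, φ.toFormula.relabel (Sum.map id (Fin.castAdd ψ.m)) ⊓
    ψ.toFormula.relabel (Sum.map id (Fin.natAdd φ.m)), Fin.append φ.params ψ.params⟩

@[simp]
theorem realize_inf (φ ψ : ParamFormula L M n) (v : Fin n → M) :
    (φ.inf ψ).Realize v ↔ φ.Realize v ∧ ψ.Realize v := by
  have hφ : Fin.append φ.params ψ.params ∘ Fin.castAdd ψ.m = φ.params :=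
    funext (Fin.append_left _ _)
  have hψ : Fin.append φ.params ψ.params ∘ Fin.natAdd φ.m = ψ.params :=
    funext (Fin.append_right _ _)
  simp only [inf, Realize, Language.Formula.realize_inf, Language.Formula.realize_relabel,
    Sum.elim_comp_map, Function.comp_id, hφ, hψ]

omit [L.Structure M] in
theorem paramsIn_inf {B : Set M} {φ ψ : ParamFormula L M n} (hφ : φ.paramsIn B)
    (hψ : ψ.paramsIn B) : (φ.inf ψ).paramsIn B :=
  Fin.addCases (fun i => by simpa only [ParamFormula.inf, Fin.append_left] using hφ i)
    (fun i => by simpa only [ParamFormula.inf, Fin.append_right] using hψ i)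

noncomputable def exs (φ : ParamFormula L M (n + 1)) : ParamFormula L M n :=
  ⟨φ.m, (φ.toFormula.relabel
      (Sum.elim (Fin.cases (Sum.inr 0) (Sum.inl ∘ Sum.inl)) (Sum.inl ∘ Sum.inr))).iExs (Fin 1),
    φ.params⟩

@[simp]
theorem realize_exs (φ : ParamFormula L M (n + 1)) (v : Fin n → M) :
    φ.exs.Realize v ↔ ∃ y, φ.Realize (Matrix.vecCons y v) := by
  simp only [exs, Realize, Language.Formula.realize_iExs, Language.Formula.realize_relabel]
  rw [(Equiv.funUnique (Fin 1) M).exists_congr_left]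
  refine exists_congr fun y => iff_of_eq (congrArg _ ?_)
  funext i
  rcases i with i | i
  · refine Fin.cases ?_ (fun j => ?_) i <;> simp
  · simp

def eqParam (i : Fin n) (b : M) : ParamFormula L M n :=
  ⟨1, (Language.Term.var (Sum.inl i)).equal (Language.Term.var (Sum.inr 0)), fun _ => b⟩

@[simp]
theorem realize_eqParam (i : Fin n) (b : M) (v : Fin n → M) :
    (eqParam (L := L) i b).Realize v ↔ v i = b := by
  simp [eqParam, Realize]

end ParamFormula

namespace DefGroup

variable {D : DefGroup L M}

theorem exists_paramFormula_realize_inv_mul {B : Set M} (hA : D.AStar ⊆ B) {s : M} (hs : s ∈ B)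
    {f : ParamFormula L M 1} (hf : f.paramsIn B) :
    ∃ g : ParamFormula L M 1, g.paramsIn B ∧
      ∀ x, g.Realize (fun _ => x) ↔ f.Realize (fun _ => D.mul (D.inv s) x) := by
  obtain ⟨φi, hφiA, hφi⟩ := D.inv_definable
  obtain ⟨φm, hφmA, hφm⟩ := D.mul_definable
  -- variables `(z, y, w, x)`: `w = s`, `w⁻¹ = y`, `y * x = z` and `f(z)`
  open ParamFormula in
  refine ⟨exs (exs (exs (((eqParam 2 s).inf (φi.comap ![2, 1])).inf
    ((φm.comap ![1, 3, 0]).inf (f.comap ![0]))))), ?_, fun x => ?_⟩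
  · exact paramsIn_inf (paramsIn_inf (fun _ => hs) fun i => hA (hφiA i))
      (paramsIn_inf (fun i => hA (hφmA i)) hf)
  · simp only [ParamFormula.realize_exs, ParamFormula.realize_inf, ParamFormula.realize_eqParam,
      ParamFormula.realize_comap, Matrix.comp_vecCons, Matrix.cons_val, Matrix.cons_val_one,
      Matrix.cons_val_zero, Matrix.empty_eq, hφi, hφm, exists_and_left, existsAndEq, true_and,
      and_true, exists_eq_left]
    rw [Matrix.vec_single_eq_const]

theorem inv_mul_mem_realizeSet_of_forall_realize_iff {B : Set M} (hA : D.AStar ⊆ B)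
    {p : Set (ParamFormula L M 1)} (hp : IsTypeOver p B) {s d₁ d₂ : M} (hs : s ∈ B)
    (hd : ∀ f : ParamFormula L M 1, f.paramsIn B →
      (f.Realize (fun _ => d₁) ↔ f.Realize (fun _ => d₂)))
    (h₁ : D.mul (D.inv s) d₁ ∈ realizeSet p) : D.mul (D.inv s) d₂ ∈ realizeSet p := by
  intro f hf
  obtain ⟨g, hgB, hg⟩ := exists_paramFormula_realize_inv_mul hA hs (hp f hf)
  exact (hg d₂).mp ((hd g hgB).mp ((hg d₁).mpr (h₁ f hf)))

instance (D : DefGroup L M) : Group D.carrier where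
  mul x y := ⟨D.mul x y, D.mul_mem' x x.2 y y.2⟩
  one := ⟨D.one, D.one_mem'⟩
  inv x := ⟨D.inv x, D.inv_mem' x x.2⟩
  mul_assoc x y z := Subtype.ext (D.mul_assoc' x x.2 y y.2 z z.2)
  one_mul x := Subtype.ext (D.one_mul' x x.2)
  mul_one x := Subtype.ext (D.mul_one' x x.2)
  inv_mul_cancel x := Subtype.ext (D.inv_mul' x x.2)

theorem inv_mul_eq_inv_mul_inv_mul {s d₁ d₂ : M} (hs : s ∈ D.carrier) (hd₁ : d₁ ∈ D.carrier)
    (hd₂ : d₂ ∈ D.carrier) :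
    D.mul (D.inv d₁) d₂ = D.mul (D.inv (D.mul (D.inv s) d₁)) (D.mul (D.inv s) d₂) := by
  have key : ((⟨d₁, hd₁⟩ : D.carrier)⁻¹ * ⟨d₂, hd₂⟩ : D.carrier) =
      ((⟨s, hs⟩ : D.carrier)⁻¹ * ⟨d₁, hd₁⟩)⁻¹ * ((⟨s, hs⟩ : D.carrier)⁻¹ * ⟨d₂, hd₂⟩) := by
    group
  exact congrArg Subtype.val key

namespace IsSubgroup

variable {H : Set M}

theorem inv_mul_mem_of_inv_mul_mem (hH : D.IsSubgroup H) {s d₁ d₂ : M} (hs : s ∈ D.carrier)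
    (hd₁ : d₁ ∈ D.carrier) (hd₂ : d₂ ∈ D.carrier) (h₁ : D.mul (D.inv s) d₁ ∈ H)
    (h₂ : D.mul (D.inv s) d₂ ∈ H) : D.mul (D.inv d₁) d₂ ∈ H := by
  rw [inv_mul_eq_inv_mul_inv_mul hs hd₁ hd₂]
  exact hH.2.2.1 _ (hH.2.2.2 _ h₁) _ h₂

theorem foldr_mul_mem (hH : D.IsSubgroup H) {l : List M} (hl : ∀ x ∈ l, x ∈ H) :
    l.foldr D.mul D.one ∈ H := by
  induction l with
  | nil => exact hH.2.1
  | cons x l ih =>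
    exact hH.2.2.1 x (hl x List.mem_cons_self) _ (ih fun y hy => hl y (List.mem_cons_of_mem x hy))

end IsSubgroup

end DefGroup

theorem observation_h12_2_general
    {L : FirstOrder.Language.{u, u}} {M : Type u} [L.Structure M]
    (D : DefGroup L M)
    (H : Set M) (hH : D.IsSubgroup H)
    (α : Type u) (abar : α → M)
    (hArange : D.AStar ⊆ Set.range abar)
    (hreps : ∀ g ∈ D.carrier, ∃ i : α, abar i ∈ D.carrier ∧ D.mul (D.inv (abar i)) g ∈ H)
    (p : Set (ParamFormula L M 1))
    (hpover : IsTypeOver p (Set.range abar)) (hpH : realizeSet p = H)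
    (n : ℕ) :
    D.qTupleSet abar n ⊆ realizeSet p := by
  rintro _ ⟨d, hdG, hd, rfl⟩
  rw [hpH]
  refine hH.foldr_mul_mem fun x hx => ?_
  obtain ⟨ℓ, rfl⟩ := List.mem_ofFn.mp hx
  obtain ⟨i, hiG, hi⟩ := hreps _ (hdG ℓ).1
  refine hH.inv_mul_mem_of_inv_mul_mem hiG (hdG ℓ).1 (hdG ℓ).2 hi ?_
  rw [← hpH] at hi ⊢
  exact D.inv_mul_mem_realizeSet_of_forall_realize_iff hArange hpover ⟨i, rfl⟩ (hd ℓ) hi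

/-- Observation 1.7(2) of [Sh:886]: if `H` is a subgroup of `G` of bounded index, `ā`
enumerates an elementary submodel containing `A*` and representatives of all left `H`-cosets,
and `p(x) ⊇ p*(x)` is a 1-type over `Rang(ā)` with `p(𝔠) = H`, then `q^n_{ā}(x) ⊢ p(x)`. -/
theorem observation_h12_2
    {L : FirstOrder.Language.{u, u}} {M : Type u} [L.Structure M]
    (κbar : Cardinal.{u}) (hκinacc : κbar.IsInaccessible) (hκT : theoryCard L < κbar)
    (hκsat : Saturated L M κbar)
    (D : DefGroup L M) (hAκ : #(D.AStar) < κbar)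
    (H : Set M) (hH : D.IsSubgroup H) (hidx : D.indexLT H κbar)
    (α : Type u) (hα : #α < κbar) (abar : α → M)
    (S : L.ElementarySubstructure M) (hSrange : (S : Set M) = Set.range abar)
    (hArange : D.AStar ⊆ Set.range abar)
    (hreps : ∀ g ∈ D.carrier, ∃ i : α, abar i ∈ D.carrier ∧ D.mul (D.inv (abar i)) g ∈ H)
    (p : Set (ParamFormula L M 1)) (hpstar : D.pStar ⊆ p)
    (hpover : IsTypeOver p (Set.range abar)) (hpH : realizeSet p = H)
    (n : ℕ) :
    D.qTupleSet abar n ⊆ realizeSet p :=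
  observation_h12_2_general D H hH α abar hArange hreps p hpover hpH n

end Paper886
end

section
/- If H is a subgroup of G of bounded index which is type-definable over ā, where ā ∈ ^α𝔠 and α < κ̄, then (G:H) ≤ 2^{|T|+|α|}. -/
open FirstOrder Cardinal Set

universe u

namespace Paper886

variable {L : FirstOrder.Language.{u, u}} {M : Type u} [L.Structure M]

/-!
Suppose `H` had more than `2^λ` left cosets in `G`, where `λ = |T| + |α|`. Colour each pair
`x ≠ y` of coset representatives by some `ψ ∈ r` with `¬ ψ(x⁻¹y)`: there are at most `λ` colours,
so the Erdős–Rado argument gives one `ψ` and an infinite sequence `(w_k)` in `G` along which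
`ψ(w_k⁻¹w_l) ∧ ψ(w_l⁻¹w_k)` never holds. Realizing, one after the other, average types of `(w_k)`
along a nonprincipal ultrafilter over everything built so far, saturation yields a sequence of any
length `< κ̄` with the same property. Its members lie in pairwise distinct cosets of `H`, which
contradicts `(G : H) < κ̄`.
-/

theorem exists_transfinite_seq {N : Type u} {c : Cardinal.{u}} (P : Set N → N → Prop)
    (h : ∀ s : Set N, #s < c → ∃ x, P s x) :
    ∃ a : c.ord.ToType → N, ∀ i, P (a '' Iio i) (a i) := by
  have mk_Iio (i : c.ord.ToType) : #(Iio i) < c := by simpa using mk_Iio_lt i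
  rcases isEmpty_or_nonempty c.ord.ToType with _ | ⟨⟨i₀⟩⟩
  · exact ⟨isEmptyElim, isEmptyElim⟩
  have : Nonempty N := ⟨(h ∅ (by simpa using zero_le.trans_lt (mk_Iio i₀))).choose⟩
  let a : c.ord.ToType → N := wellFounded_lt.fix fun i rec =>
    Classical.epsilon (P (range fun j : Iio i => rec j j.2))
  refine ⟨a, fun i => ?_⟩
  rw [show a i = _ from wellFounded_lt.fix_eq _ i, ← image_eq_range]
  exact Classical.epsilon_spec (h _ (mk_image_le.trans_lt (mk_Iio i)))

theorem exists_forall_lt_of_mk_le {κ : Cardinal.{u}} (hκ : ℵ₀ ≤ κ)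
    {s : Set (Order.succ κ).ord.ToType} (hs : #s ≤ κ) : ∃ i, ∀ j ∈ s, j < i := by
  refine not_isCofinal_iff.1 fun hcof => (Order.lt_succ_of_not_isMax (not_isMax κ)).not_ge ?_
  calc Order.succ κ = Order.cof (Order.succ κ).ord.ToType := by
        rw [Ordinal.cof_toType, (isRegular_succ hκ).cof_ord]
    _ ≤ #s := Order.cof_le hcof
    _ ≤ κ := hs

theorem exists_closed_subset {X : Type u} {κ μ : Cardinal.{u}} (hκ : ℵ₀ ≤ κ) (hκμ : κ < μ)
    (hμ : μ ^ κ = μ) (g : Set X → Set X) (hg : ∀ Z : Set X, #Z ≤ κ → #(g Z) ≤ μ) :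
    ∃ Y : Set X, #Y ≤ μ ∧ ∀ Z ⊆ Y, #Z ≤ κ → g Z ⊆ Y := by
  have hμ₀ : ℵ₀ ≤ μ := hκ.trans hκμ.le
  have hsucc : Order.succ κ ≤ μ := Order.succ_le_of_lt hκμ
  let cl : Set X → Set X := fun Y => Y ∪ ⋃ t : {t : Set Y // #t ≤ κ}, g (Subtype.val '' t.1)
  have mk_cl (Y : Set X) (hY : #Y ≤ μ) : #(cl Y) ≤ μ := by
    have hidx : #{t : Set Y // #t ≤ κ} ≤ μ := (mk_bounded_set_le _ _).trans <|
      (power_le_power_right (max_le hY hμ₀)).trans hμ.le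
    calc #(cl Y) ≤ μ + μ * μ := (mk_union_le _ _).trans <| add_le_add hY <|
          (mk_iUnion_le _).trans <| mul_le_mul' hidx <|
            ciSup_le' fun t => hg _ (mk_image_le.trans t.2)
      _ = μ := by rw [mul_eq_self hμ₀, add_eq_self hμ₀]
  have subset_cl (Y Z : Set X) (hZY : Z ⊆ Y) (hZ : #Z ≤ κ) : g Z ⊆ cl Y := by
    have hZ' : Subtype.val '' (Subtype.val ⁻¹' Z : Set Y) = Z := by
      rw [Subtype.image_preimage_coe, inter_eq_right.2 hZY]
    have hZ'' : #(Subtype.val ⁻¹' Z : Set Y) ≤ κ :=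
      (mk_preimage_of_injective _ _ Subtype.val_injective).trans hZ
    exact subset_union_of_subset_right (subset_iUnion_of_subset ⟨_, hZ''⟩ (by rw [hZ'])) _
  let F : (Order.succ κ).ord.ToType → Set X :=
    wellFounded_lt.fix fun i rec => ⋃ j : Iio i, cl (rec j j.2)
  have hF (i) : F i = ⋃ j : Iio i, cl (F j) := wellFounded_lt.fix_eq _ i
  have mk_F (i) : #(F i) ≤ μ := by
    induction i using WellFoundedLT.induction with
    | _ i ih =>
      have hIio : #(Iio i) ≤ μ :=
        (Order.le_of_lt_succ (by simpa using mk_Iio_lt i)).trans hκμ.le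
      rw [hF i]
      calc _ ≤ μ * μ := (mk_iUnion_le _).trans <|
            mul_le_mul' hIio (ciSup_le' fun j : Iio i => mk_cl _ (ih j.1 j.2))
        _ = μ := mul_eq_self hμ₀
  refine ⟨⋃ i, cl (F i), ?_, fun Z hZ hZκ => ?_⟩
  · calc _ ≤ μ * μ := (mk_iUnion_le _).trans <|
          mul_le_mul' ((mk_ord_toType _).trans_le hsucc) (ciSup_le' fun i => mk_cl _ (mk_F i))
      _ = μ := mul_eq_self hμ₀
  choose stage hstage using fun z : Z => mem_iUnion.1 (hZ z.2)
  obtain ⟨i, hi⟩ := exists_forall_lt_of_mk_le hκ (mk_range_le.trans hZκ : #(range stage) ≤ κ)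
  have hZF : Z ⊆ F i := fun z hz => by
    rw [hF i]
    exact mem_iUnion.2 ⟨⟨_, hi _ ⟨⟨z, hz⟩, rfl⟩⟩, hstage ⟨z, hz⟩⟩
  exact (subset_cl _ Z hZF hZκ).trans (subset_iUnion_of_subset i subset_rfl)

theorem exists_endHomogeneous_seq {X C : Type u} {κ : Cardinal.{u}} (hκ : ℵ₀ ≤ κ) (hC : #C ≤ κ)
    (hX : 2 ^ κ < #X) (f : X → X → C) :
    ∃ (b : X) (a : (Order.succ κ).ord.ToType → X),
      ∀ i, ∀ j < i, a j ≠ a i ∧ f (a j) (a i) = f (a j) b := by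
  -- `g Z` realizes every colour pattern over `Z` that is realized outside `Z`; the closed set `Y`
  -- below then contains, over each small part of it, an element coloured like the outsider `b`.
  let g (Z : Set X) : Set X :=
    range fun φ : {φ : Z → C // ∃ x ∉ Z, ∀ z : Z, f z x = φ z} => φ.2.choose
  have mk_g (Z : Set X) (hZ : #Z ≤ κ) : #(g Z) ≤ 2 ^ κ := by
    calc #(g Z) ≤ #(Z → C) := mk_range_le.trans (mk_subtype_le _)
      _ ≤ (2 ^ κ) ^ κ := by
        rw [← power_def]
        exact (power_le_power_right (hC.trans (cantor κ).le)).trans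
          (power_le_power_left (power_ne_zero _ two_ne_zero) hZ)
      _ = 2 ^ κ := by rw [← power_mul, mul_eq_self hκ]
  obtain ⟨Y, hYcard, hY⟩ := exists_closed_subset hκ (cantor κ)
    (by rw [← power_mul, mul_eq_self hκ]) g mk_g
  obtain ⟨b, -, hb⟩ := not_subset.1 fun h : Set.univ ⊆ Y =>
    (hX.trans_le ((mk_univ (α := X)).ge.trans ((mk_le_mk_of_subset h).trans hYcard))).false
  obtain ⟨a, ha⟩ := exists_transfinite_seq (N := Y) (c := Order.succ κ)
    (fun s x => x ∉ s ∧ ∀ z ∈ s, f z x = f z b) fun s hs => by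
      have hex : ∃ x ∉ Subtype.val '' s, ∀ z : Subtype.val '' s, f z x = f z b :=
        ⟨b, fun h => hb (Subtype.coe_image_subset Y s h), fun _ => rfl⟩
      have hmem : hex.choose ∈ Y := hY _ (Subtype.coe_image_subset Y s)
        (mk_image_le.trans (Order.le_of_lt_succ hs)) ⟨⟨_, hex⟩, rfl⟩
      exact ⟨⟨_, hmem⟩, fun h => hex.choose_spec.1 ⟨_, h, rfl⟩,
        fun z hz => hex.choose_spec.2 ⟨z, _, hz, rfl⟩⟩
  exact ⟨b, fun i => a i, fun i j hji =>
    ⟨fun h => (ha i).1 ⟨j, hji, Subtype.ext h⟩, (ha i).2 _ ⟨j, hji, rfl⟩⟩⟩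

theorem exists_embedding_weakly_homogeneous {X C : Type u} {κ : Cardinal.{u}} (hκ : ℵ₀ ≤ κ)
    (hC : #C ≤ κ) (hX : 2 ^ κ < #X) (f : X → X → C) :
    ∃ (c₀ : C) (w : ℕ ↪ X), ∀ k l, k ≠ l → f (w k) (w l) = c₀ ∨ f (w l) (w k) = c₀ := by
  obtain ⟨b, a, ha⟩ := exists_endHomogeneous_seq hκ hC hX f
  have hκ' : κ < #(Order.succ κ).ord.ToType := by simp
  have : Infinite (Order.succ κ).ord.ToType := infinite_iff.2 (hκ.trans hκ'.le)
  obtain ⟨c₀, hc₀⟩ := exists_infinite_fiber (fun i => f (a i) b) (hC.trans_lt hκ')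
  let e := Infinite.natEmbedding ((fun i => f (a i) b) ⁻¹' {c₀})
  have key {k l : ℕ} (h : (e k).1 < (e l).1) : a (e k) ≠ a (e l) ∧ f (a (e k)) (a (e l)) = c₀ :=
    ⟨(ha _ _ h).1, (ha _ _ h).2.trans (e k).2⟩
  have hne {k l : ℕ} (hkl : k ≠ l) : (e k).1 ≠ (e l).1 :=
    fun h => hkl (e.injective (Subtype.ext h))
  refine ⟨c₀, ⟨fun k => a (e k), fun k l hkl => ?_⟩, fun k l hkl => ?_⟩
  · by_contra h
    rcases (hne h).lt_or_gt with hlt | hlt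
    exacts [(key hlt).1 hkl, (key hlt).1 hkl.symm]
  · rcases (hne hkl).lt_or_gt with hlt | hlt
    exacts [Or.inl (key hlt).2, Or.inr (key hlt).2]

theorem mk_formula_le_theoryCard {α : Type} [Finite α] : #(L.Formula α) ≤ theoryCard L := by
  have hα : lift.{u} #α ≤ ℵ₀ := (lift_lt_aleph0.2 (lt_aleph0_of_finite α)).le
  calc #(L.Formula α) ≤ #(Σ n, L.BoundedFormula α n) :=
        mk_le_of_injective (f := Sigma.mk 0) sigma_mk_injective
    _ ≤ max ℵ₀ (lift.{u} #α + lift.{0} L.card) := Language.BoundedFormula.card_le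
    _ ≤ theoryCard L := by
      rw [lift_uzero]
      exact max_le le_sup_left ((add_le_max _ _).trans
        (max_le (max_le (hα.trans le_sup_left) le_sup_right) le_sup_left))

theorem mk_paramFormula_le {L : FirstOrder.Language.{u, u}} {M : Type u} (n : ℕ) (B : Set M) :
    #{φ : ParamFormula L M n // φ.paramsIn B} ≤ theoryCard L ⊔ #B := by
  have hκ : ℵ₀ ≤ theoryCard L ⊔ #B := le_sup_of_le_left le_sup_left
  let code (φ : {φ : ParamFormula L M n // φ.paramsIn B}) :
      Σ m : ℕ, L.Formula (Fin n ⊕ Fin m) × (Fin m → B) :=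
    ⟨φ.1.m, φ.1.toFormula, fun i => ⟨φ.1.params i, φ.2 i⟩⟩
  have hcode : Function.Injective code := by
    rintro ⟨⟨m, φ, ps⟩, hps⟩ ⟨⟨m', φ', ps'⟩, hps'⟩ h
    obtain ⟨rfl, h⟩ := Sigma.mk.inj h
    obtain ⟨rfl, h⟩ := Prod.mk.inj (eq_of_heq h)
    obtain rfl : ps = ps' := funext fun i => congrArg Subtype.val (congrFun h i)
    rfl
  refine (mk_le_of_injective hcode).trans ?_
  rw [mk_sigma]
  refine (sum_le_sum _ (fun _ => theoryCard L ⊔ #B) fun m => ?_).trans ?_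
  · simp only [mk_prod, mk_arrow, lift_id, lift_uzero, mk_fin, lift_natCast, power_natCast]
    calc _ ≤ (theoryCard L ⊔ #B) * (theoryCard L ⊔ #B) :=
          mul_le_mul' (mk_formula_le_theoryCard.trans le_sup_left)
            ((pow_le_pow_left₀ zero_le le_sup_right m).trans (power_nat_le hκ))
      _ = theoryCard L ⊔ #B := mul_eq_self hκ
  · simp [mul_eq_max le_rfl hκ, hκ]

theorem IsTypeOver.mk_le {L : FirstOrder.Language.{u, u}} {M : Type u}
    {p : Set (ParamFormula L M 1)} {B : Set M} (hp : IsTypeOver p B) :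
    #p ≤ theoryCard L ⊔ #B :=
  (mk_le_of_injective (f := fun φ : p => (⟨φ.1, hp φ.1 φ.2⟩ : {φ // φ.paramsIn B}))
    fun _ _ h => Subtype.ext (by simpa using congrArg Subtype.val h)).trans
      (mk_paramFormula_le 1 B)

theorem ParamFormula.definable {n : ℕ} {φ : ParamFormula L M n} {B : Set M}
    (hφ : φ.paramsIn B) : B.Definable L {v | φ.Realize v} := by
  rw [Set.definable_iff_exists_formula_sum]
  refine ⟨φ.toFormula.relabel (Sum.elim Sum.inr fun i => Sum.inl ⟨φ.params i, hφ i⟩), ?_⟩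
  ext v
  simp only [mem_ofPred_eq, ParamFormula.Realize, Language.Formula.realize_relabel]
  congr! 1
  ext (i | i) <;> rfl

theorem ParamFormula.definable₁ {φ : ParamFormula L M 1} {B : Set M} (hφ : φ.paramsIn B) :
    B.Definable₁ L {a | φ.Realize fun _ => a} := by
  have h (v : Fin 1 → M) : (fun _ => v 0) = v := funext fun i => by rw [Fin.fin_one_eq_zero i]
  simpa [Set.Definable₁, h] using ParamFormula.definable hφ

theorem exists_paramFormula_of_definable {n : ℕ} {B : Set M} {s : Set (Fin n → M)}
    (h : B.Definable L s) :
    ∃ φ : ParamFormula L M n, φ.paramsIn B ∧ ∀ v, φ.Realize v ↔ v ∈ s := by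
  obtain ⟨A, hAB, hA⟩ := Set.definable_iff_finitely_definable.1 h
  obtain ⟨ψ, rfl⟩ := Set.definable_iff_exists_formula_sum.1 hA
  let e := Fintype.equivFin (A : Set M)
  refine ⟨⟨_, ψ.relabel (Sum.elim (Sum.inr ∘ e) Sum.inl), Subtype.val ∘ e.symm⟩,
    fun i => hAB (e.symm i).2, fun v => ?_⟩
  simp only [mem_ofPred_eq, ParamFormula.Realize, Language.Formula.realize_relabel]
  congr! 1
  ext (i | i) <;> simp

theorem definableFun_of_graph {B : Set M} {α : Type*} {k : ℕ} {φ : ParamFormula L M k}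
    (hφ : φ.paramsIn B) (σ : Fin k → Option α) {f : (α → M) → M}
    (h : ∀ w : Option α → M, φ.Realize (w ∘ σ) ↔ f (w ∘ some) = w none) :
    B.DefinableFun L f := by
  show B.Definable L f.tupleGraph
  convert (ParamFormula.definable hφ).preimage_comp σ using 1
  ext w
  exact (h w).symm

theorem _root_.Set.DefinableFun.comp₂ {A : Set M} {α : Type*} {op : M → M → M}
    (hop : A.DefinableFun L fun u : Fin 2 → M => op (u 0) (u 1)) {f g : (α → M) → M}
    (hf : A.DefinableFun L f) (hg : A.DefinableFun L g) :
    A.DefinableFun L fun v => op (f v) (g v) :=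
  hop.comp (g := fun v => ![f v, g v]) (Fin.forall_fin_two.2 ⟨hf, hg⟩)

theorem _root_.Set.DefinableFun.comp₁ {A : Set M} {α : Type*} {op : M → M}
    (hop : A.DefinableFun L fun u : Fin 1 → M => op (u 0)) {f : (α → M) → M}
    (hf : A.DefinableFun L f) : A.DefinableFun L fun v => op (f v) :=
  hop.comp (g := fun v => ![f v]) (Fin.forall_fin_one.2 hf)

variable (L) in
/-- `b` realizes the average type `Av(U, w / B)` of the sequence `w` along `U` over `B`. -/
def RealizesAvg {ι : Type*} (U : Filter ι) (w : ι → M) (B : Set M) (b : M) : Prop :=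
  ∀ s : Set M, B.Definable₁ L s → (∀ᶠ k in U, w k ∈ s) → b ∈ s

theorem Saturated.exists_realizesAvg {κ : Cardinal.{u}} (hsat : Saturated L M κ) {B : Set M}
    (hB : #B < κ) {ι : Type*} (U : Ultrafilter ι) (w : ι → M) :
    ∃ b, RealizesAvg L U w B b := by
  obtain ⟨b, hb⟩ := hsat B hB {φ | φ.paramsIn B ∧ ∀ᶠ k in U, φ.Realize fun _ => w k}
    (fun φ hφ => hφ.1) fun s hsp hs => by
      obtain ⟨k, hk⟩ := ((Filter.eventually_all_finite hs).2 fun φ hφ => (hsp hφ).2).exists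
      exact ⟨w k, hk⟩
  refine ⟨b, fun s hs hU => ?_⟩
  obtain ⟨φ, hφB, hφ⟩ := exists_paramFormula_of_definable hs
  exact (hφ _).1 (hb φ ⟨hφB, hU.mono fun k hk => (hφ _).2 hk⟩)

theorem Saturated.exists_pairwise_extension {κ : Cardinal.{u}} (hsat : Saturated L M κ)
    (hκ : ℵ₀ < κ) {B : Set M} (hB : #B < κ) {R : M → M → Prop}
    (hRsymm : ∀ x y, R x y → R y x) (hRdef : ∀ c, (B ∪ {c}).Definable₁ L {x | R x c})
    {w : ℕ → M} (hw : Pairwise fun k l => R (w k) (w l)) {μ : Cardinal.{u}} (hμ : μ ≤ κ) :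
    ∃ b : μ.ord.ToType → M, (Pairwise fun i j => R (b i) (b j)) ∧
      ∀ i, ∀ p : Set (ParamFormula L M 1), IsTypeOver p B →
        (∀ k, w k ∈ realizeSet p) → b i ∈ realizeSet p := by
  let U := Filter.hyperfilter ℕ
  obtain ⟨b, hb⟩ := exists_transfinite_seq (c := μ)
    (fun s x => RealizesAvg L U w (B ∪ range w ∪ s) x) fun s hs => by
      refine hsat.exists_realizesAvg ?_ U w
      refine (mk_union_le _ _).trans_lt (add_lt_of_lt hκ.le ?_ (hs.trans_le hμ))
      exact (mk_union_le _ _).trans_lt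
        (add_lt_of_lt hκ.le hB ((countable_range w).le_aleph0.trans_lt hκ))
  have hbw (i) (k) : R (b i) (w k) := by
    refine hb i _ ((hRdef (w k)).mono ?_) ?_
    · exact union_subset (subset_union_left.trans subset_union_left)
        (singleton_subset_iff.2 (Or.inl (Or.inr (mem_range_self k))))
    · have : ∀ᶠ l in U, l ≠ k := Filter.hyperfilter_le_cofinite (Filter.eventually_cofinite_ne k)
      exact this.mono fun l hl => hw hl
  have hbb {i j} (hji : j < i) : R (b j) (b i) := by
    refine hRsymm _ _ (hb i _ ((hRdef (b j)).mono ?_)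
      (Filter.Eventually.of_forall fun k => hRsymm _ _ (hbw j k)))
    exact union_subset (subset_union_left.trans subset_union_left)
      (singleton_subset_iff.2 (Or.inr ⟨j, hji, rfl⟩))
  refine ⟨b, fun i j hij => ?_, fun i p hp hwp φ hφ => ?_⟩
  · rcases hij.lt_or_gt with h | h
    exacts [hbb h, hRsymm _ _ (hbb h)]
  · exact hb i _ ((ParamFormula.definable₁ (hp φ hφ)).mono
      (subset_union_left.trans subset_union_left))
      (Filter.Eventually.of_forall fun k => hwp k φ hφ)

namespace DefGroup

variable (D : DefGroup L M)

theorem definableFun_mul : D.AStar.DefinableFun L fun v : Fin 2 → M => D.mul (v 0) (v 1) := by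
  obtain ⟨φ, hφ, hmul⟩ := D.mul_definable
  refine definableFun_of_graph hφ ![some 0, some 1, none] fun w => ?_
  have : w ∘ ![some 0, some 1, none] = ![w (some 0), w (some 1), w none] := by
    ext i; fin_cases i <;> rfl
  rw [this, hmul]
  rfl

theorem definableFun_inv : D.AStar.DefinableFun L fun v : Fin 1 → M => D.inv (v 0) := by
  obtain ⟨φ, hφ, hinv⟩ := D.inv_definable
  refine definableFun_of_graph hφ ![some 0, none] fun w => ?_
  have : w ∘ ![some 0, none] = ![w (some 0), w none] := by
    ext i; fin_cases i <;> rfl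
  rw [this, hinv]
  rfl

theorem mul_mul_inv_mul_cancel {a b c : M} (ha : a ∈ D.carrier) (hb : b ∈ D.carrier)
    (hc : c ∈ D.carrier) : D.mul (D.mul a b) (D.mul (D.inv b) c) = D.mul a c := by
  have hb' := D.inv_mem' b hb
  rw [D.mul_assoc' a ha b hb _ (D.mul_mem' _ hb' c hc), ← D.mul_assoc' b hb _ hb' c hc,
    D.mul_inv' b hb, D.one_mul' c hc]

theorem inv_inv_mul_eq_inv_mul {x y : M} (hx : x ∈ D.carrier) (hy : y ∈ D.carrier) :
    D.inv (D.mul (D.inv x) y) = D.mul (D.inv y) x := by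
  have hx' := D.inv_mem' x hx
  have hy' := D.inv_mem' y hy
  have hxy := D.mul_mem' _ hx' y hy
  have h1 : D.mul (D.mul (D.inv x) y) (D.mul (D.inv y) x) = D.one := by
    rw [D.mul_mul_inv_mul_cancel hx' hy hx, D.inv_mul' x hx]
  calc D.inv (D.mul (D.inv x) y)
      = D.mul (D.mul (D.inv (D.mul (D.inv x) y)) (D.mul (D.inv x) y)) (D.mul (D.inv y) x) := by
        rw [D.mul_assoc' _ (D.inv_mem' _ hxy) _ hxy _ (D.mul_mem' _ hy' x hx), h1,
          D.mul_one' _ (D.inv_mem' _ hxy)]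
    _ = D.mul (D.inv y) x := by rw [D.inv_mul' _ hxy, D.one_mul' _ (D.mul_mem' _ hy' x hx)]

variable {D} {H : Set M}

theorem inv_mul_mem_symm (hH : D.IsSubgroup H) {x y : M} (hx : x ∈ D.carrier)
    (hy : y ∈ D.carrier) (h : D.mul (D.inv x) y ∈ H) : D.mul (D.inv y) x ∈ H :=
  D.inv_inv_mul_eq_inv_mul hx hy ▸ hH.2.2.2 _ h

theorem inv_mul_mem_trans (hH : D.IsSubgroup H) {s x y : M} (hs : s ∈ D.carrier)
    (hx : x ∈ D.carrier) (hy : y ∈ D.carrier) (hsx : D.mul (D.inv s) x ∈ H)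
    (hsy : D.mul (D.inv s) y ∈ H) : D.mul (D.inv x) y ∈ H :=
  D.mul_mul_inv_mul_cancel (D.inv_mem' x hx) hs hy ▸
    hH.2.2.1 _ (inv_mul_mem_symm hH hs hx hsx) _ hsy

theorem exists_transversal (hH : D.IsSubgroup H) :
    ∃ T ⊆ D.carrier, (∀ x ∈ T, ∀ y ∈ T, D.mul (D.inv x) y ∈ H → x = y) ∧
      ∀ g ∈ D.carrier, ∃ t ∈ T, D.mul (D.inv t) g ∈ H := by
  let r : Setoid D.carrier :=
    ⟨fun x y => D.mul (D.inv x) y ∈ H, ⟨fun x => D.inv_mul' x x.2 ▸ hH.2.1,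
      fun h => inv_mul_mem_symm hH (Subtype.prop _) (Subtype.prop _) h,
      fun hxy hyz => inv_mul_mem_trans hH (Subtype.prop _) (Subtype.prop _) (Subtype.prop _)
        (inv_mul_mem_symm hH (Subtype.prop _) (Subtype.prop _) hxy) hyz⟩⟩
  refine ⟨range fun q : Quotient r => (q.out : M), ?_, ?_,
    fun g hg => ⟨_, mem_range_self ⟦⟨g, hg⟩⟧, Quotient.mk_out (s := r) ⟨g, hg⟩⟩⟩
  · rintro _ ⟨q, rfl⟩
    exact q.out.2
  · rintro _ ⟨p, rfl⟩ _ ⟨q, rfl⟩ h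
    rw [(Quotient.out_equiv_out (s := r) (x := p) (y := q)).1 h]

theorem mk_le_of_pairwise_inv_mul_not_mem (hH : D.IsSubgroup H) {S : Set M}
    (hSG : S ⊆ D.carrier) (hS : ∀ g ∈ D.carrier, ∃ s ∈ S, D.mul (D.inv s) g ∈ H) {ι : Type u}
    {b : ι → M} (hbG : ∀ i, b i ∈ D.carrier)
    (hb : Pairwise fun i j => D.mul (D.inv (b i)) (b j) ∉ H) : #ι ≤ #S := by
  choose s hsS hs using fun i => hS (b i) (hbG i)
  refine mk_le_of_injective (f := fun i => (⟨s i, hsS i⟩ : S)) fun i j hij => ?_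
  by_contra hne
  have hsij : s i = s j := congrArg Subtype.val hij
  exact hb hne (inv_mul_mem_trans hH (hSG (hsS i)) (hbG i) (hbG j) (hs i) (hsij ▸ hs j))

variable (D) in
def Near (ψ : ParamFormula L M 1) (x y : M) : Prop :=
  ψ.Realize (fun _ => D.mul (D.inv x) y) ∧ ψ.Realize (fun _ => D.mul (D.inv y) x)

theorem near_of_inv_mul_mem {r : Set (ParamFormula L M 1)} (hH : D.IsSubgroup (realizeSet r))
    {ψ : ParamFormula L M 1} (hψ : ψ ∈ r) {x y : M} (hx : x ∈ D.carrier) (hy : y ∈ D.carrier)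
    (h : D.mul (D.inv x) y ∈ realizeSet r) : D.Near ψ x y :=
  ⟨h ψ hψ, inv_mul_mem_symm hH hx hy h ψ hψ⟩

variable (D) in
theorem definable₁_not_near (ψ : ParamFormula L M 1) (c : M) :
    (D.AStar ∪ range ψ.params ∪ {c}).Definable₁ L {x | ¬ D.Near ψ x c} := by
  set A := D.AStar ∪ range ψ.params ∪ {c}
  have hmul : A.DefinableFun L fun u : Fin 2 → M => D.mul (u 0) (u 1) :=
    D.definableFun_mul.mono (subset_union_left.trans subset_union_left)
  have hinv : A.DefinableFun L fun u : Fin 1 → M => D.inv (u 0) :=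
    D.definableFun_inv.mono (subset_union_left.trans subset_union_left)
  have hc : A.DefinableFun L fun _ : Fin 1 → M => c := L.definableFun_const _ (by simp [A])
  have hψ : A.Definable L {v | ψ.Realize v} :=
    (ParamFormula.definable fun i => mem_range_self i).mono
      (subset_union_right.trans subset_union_left)
  have h₁ : A.DefinableFun L fun v : Fin 1 → M => D.mul (D.inv (v 0)) c := hmul.comp₂ hinv hc
  have h₂ : A.DefinableFun L fun v : Fin 1 → M => D.mul (D.inv c) (v 0) :=
    hmul.comp₂ (hinv.comp₁ hc) (Set.DefinableFun.proj L)
  exact ((hψ.preimage_map fun _ => h₁).inter (hψ.preimage_map fun _ => h₂)).compl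

theorem exists_seq_not_near {r : Set (ParamFormula L M 1)} {κ : Cardinal.{u}} (hκ : ℵ₀ ≤ κ)
    (hr : #r ≤ κ) {T : Set M} (hT : 2 ^ κ < #T)
    (hTr : ∀ x ∈ T, ∀ y ∈ T, x ≠ y → D.mul (D.inv x) y ∉ realizeSet r) :
    ∃ ψ ∈ r, ∃ w : ℕ → M, (∀ k, w k ∈ T) ∧ Pairwise fun k l => ¬ D.Near ψ (w k) (w l) := by
  have hcolour (x y : T) (hxy : x ≠ y) : ∃ ψ : r, ¬ ψ.1.Realize fun _ => D.mul (D.inv x) y := by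
    simpa [realizeSet] using hTr x x.2 y y.2 (Subtype.coe_ne_coe.2 hxy)
  have : Nontrivial T := one_lt_iff_nontrivial.1 <|
    one_le_aleph0.trans_lt ((hκ.trans (cantor κ).le).trans_lt hT)
  obtain ⟨x₀, y₀, hxy₀⟩ := exists_pair_ne T
  have : Nonempty r := ⟨(hcolour x₀ y₀ hxy₀).choose⟩
  classical
  let f (x y : T) : r := if h : x ≠ y then (hcolour x y h).choose else Classical.arbitrary r
  have hf {x y : T} (hxy : x ≠ y) : ¬ (f x y).1.Realize fun _ => D.mul (D.inv x) y := by
    simpa only [f, dif_pos hxy] using (hcolour x y hxy).choose_spec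
  obtain ⟨ψ, w, hw⟩ := exists_embedding_weakly_homogeneous hκ hr hT f
  refine ⟨ψ, ψ.2, fun k => w k, fun k => (w k).2, fun k l hkl hnear => ?_⟩
  rcases hw k l hkl with h | h
  · exact hf (w.injective.ne hkl) (h ▸ hnear.1)
  · exact hf (w.injective.ne hkl.symm) (h ▸ hnear.2)

end DefGroup

theorem observation_h12_5_general
    {L : FirstOrder.Language.{u, u}} {M : Type u} [L.Structure M]
    (κbar : Cardinal.{u}) (hκinacc : κbar.IsInaccessible)
    (hκsat : Saturated L M κbar)
    (D : DefGroup L M) (hAκ : #(D.AStar) < κbar)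
    (α : Type u) (abar : α → M)
    (r : Set (ParamFormula L M 1)) (hrover : IsTypeOver r (Set.range abar))
    (H : Set M) (hHr : H = realizeSet r)
    (hH : D.IsSubgroup H) (hidx : D.indexLT H κbar) :
    D.indexLE H (2 ^ (theoryCard L ⊔ #α)) := by
  subst hHr
  obtain ⟨S, hSG, hScard, hScover⟩ := hidx
  obtain ⟨T, hTG, hTinj, hTcover⟩ := D.exists_transversal hH
  by_contra hindex
  have hT : 2 ^ (theoryCard L ⊔ #α) < #T := lt_of_not_ge fun h => hindex ⟨T, hTG, h, hTcover⟩
  have hr : #r ≤ theoryCard L ⊔ #α := hrover.mk_le.trans (sup_le_sup_left mk_range_le _)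
  obtain ⟨ψ, hψr, w, hwT, hw⟩ := D.exists_seq_not_near (le_sup_of_le_left le_sup_left) hr hT
    fun x hx y hy hxy h => hxy (hTinj x hx y hy h)
  have hψ : #(D.AStar ∪ range ψ.params : Set M) < κbar :=
    (mk_union_le _ _).trans_lt (add_lt_of_lt hκinacc.aleph0_lt.le hAκ
      ((finite_range ψ.params).lt_aleph0.trans hκinacc.aleph0_lt))
  obtain ⟨b, hb, hbtype⟩ := hκsat.exists_pairwise_extension hκinacc.aleph0_lt hψ
    (fun x y h hnear => h hnear.symm) (D.definable₁_not_near ψ) hw (Order.succ_le_of_lt hScard)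
  have hbG (i) : b i ∈ D.carrier :=
    hbtype i _ (fun χ hχ j => Or.inl (D.pStar_over χ hχ j)) fun k => hTG (hwT k)
  have hcard := D.mk_le_of_pairwise_inv_mul_not_mem hH hSG hScover hbG fun i j hij h =>
    hb hij (DefGroup.near_of_inv_mul_mem hH hψr (hbG i) (hbG j) h)
  rw [mk_ord_toType] at hcard
  exact (Order.lt_succ_of_not_isMax (not_isMax #S)).not_ge hcard

/-- Observation 1.7(5) of [Sh:886]: if `H` is a subgroup of `G` of bounded index which is
type-definable over a tuple `ā` of length `α < κ̄`, then `(G : H) ≤ 2^{|T|+|α|}`. -/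
theorem observation_h12_5
    {L : FirstOrder.Language.{u, u}} {M : Type u} [L.Structure M]
    (κbar : Cardinal.{u}) (hκinacc : κbar.IsInaccessible) (hκT : theoryCard L < κbar)
    (hκsat : Saturated L M κbar)
    (D : DefGroup L M) (hAκ : #(D.AStar) < κbar)
    (α : Type u) (hα : #α < κbar) (abar : α → M)
    (r : Set (ParamFormula L M 1)) (hrover : IsTypeOver r (Set.range abar))
    (H : Set M) (hHr : H = realizeSet r)
    (hH : D.IsSubgroup H) (hidx : D.indexLT H κbar) :
    D.indexLE H (2 ^ (theoryCard L ⊔ #α)) :=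
  observation_h12_5_general κbar hκinacc hκsat D hAκ α abar r hrover H hHr hH hidx

end Paper886
end

section
/- Any subgroup of G which is union-type-definable (using altogether < κ̄ parameters) and of bounded index in G contains a subgroup of the form ⋃_{n<ω} q^n_{ā}(𝔠) for some sequence ā ∈ ^{κ̄>}𝔠 with A* ⊆ Rang(ā). -/
open FirstOrder Cardinal Set

universe u

namespace Paper886

variable {L : FirstOrder.Language.{u, u}} {M : Type u} [L.Structure M]

/-! Let `ā` enumerate `A* ∪ B₀ ∪ S⁻¹`, where `H = ⋃ᵢ pᵢ(𝔠)` with the `pᵢ` over `B₀` and the left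
cosets `sH`, `s ∈ S`, cover `G`. Left translation by `s⁻¹` is definable over `A* ∪ {s⁻¹}`, so if
`d₁, d₂ ∈ G` have the same type over `ā` and `s⁻¹d₁ ∈ pᵢ(𝔠)`, then also `s⁻¹d₂ ∈ pᵢ(𝔠)`. Hence
`d₁⁻¹d₂ = (s⁻¹d₁)⁻¹(s⁻¹d₂) ∈ H`, and `H` contains every product of such elements, i.e. every
`q^n_ā(𝔠)`. -/

variable (L) in
def DefinableFun (A : Set M) (g : M → M) : Prop :=
  ∃ φ : ParamFormula L M 2, φ.paramsIn A ∧ ∀ x y : M, (φ.Realize ![x, y] ↔ g x = y)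

lemma DefinableFun.exists_realize_comp {A : Set M} {g : M → M} (hg : DefinableFun L A g)
    (f : ParamFormula L M 1) :
    ∃ ψ : ParamFormula L M 1, ψ.paramsIn (A ∪ range f.params) ∧
      ∀ x : M, ((ψ.Realize fun _ => x) ↔ f.Realize fun _ => g x) := by
  obtain ⟨φ, hφA, hφ⟩ := hg
  -- `ψ(x) := ∃ y, φ(x, y) ∧ f(y)`, with the parameters of `φ` and `f` concatenated
  let σφ : Fin 2 ⊕ Fin φ.m → (Fin 1 ⊕ Fin (φ.m + f.m)) ⊕ Fin 1 :=
    Sum.elim ![.inl (.inl 0), .inr 0] fun j => .inl (.inr (Fin.castAdd f.m j))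
  let σf : Fin 1 ⊕ Fin f.m → (Fin 1 ⊕ Fin (φ.m + f.m)) ⊕ Fin 1 :=
    Sum.elim (fun _ => .inr 0) fun j => .inl (.inr (Fin.natAdd φ.m j))
  refine ⟨⟨φ.m + f.m, ((φ.toFormula.relabel σφ) ⊓ (f.toFormula.relabel σf)).iExs (Fin 1),
    Fin.append φ.params f.params⟩, ?_, fun x => ?_⟩
  · intro i
    refine Fin.addCases (fun j => ?_) (fun j => ?_) i
    · simp [hφA j]
    · simp
  · have hσφ : ∀ y : Fin 1 → M, Sum.elim (Sum.elim (fun _ => x) (Fin.append φ.params f.params))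
        y ∘ σφ = Sum.elim ![x, y 0] φ.params := by
      intro y; funext w; rcases w with w | w
      · fin_cases w <;> rfl
      · simp [σφ]
    have hσf : ∀ y : Fin 1 → M, Sum.elim (Sum.elim (fun _ => x) (Fin.append φ.params f.params))
        y ∘ σf = Sum.elim (fun _ => y 0) f.params := by
      intro y; funext w; rcases w with w | w
      · simp [σf, Subsingleton.elim w 0]
      · simp [σf]
    simp only [ParamFormula.Realize, Language.Formula.realize_iExs, Language.Formula.realize_inf,
      Language.Formula.realize_relabel]
    constructor
    · rintro ⟨y, hgy, hfy⟩
      rw [hσφ, ← ParamFormula.Realize, hφ] at hgy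
      rwa [hσf, ← hgy] at hfy
    · intro hfx
      refine ⟨fun _ => g x, ?_, ?_⟩
      · rw [hσφ, ← ParamFormula.Realize, hφ]
      · rwa [hσf]

namespace DefGroup

variable (D : DefGroup L M)

lemma definableFun_mul_left (t : M) : DefinableFun L (D.AStar ∪ {t}) (D.mul t) := by
  obtain ⟨φ, hφA, hφ⟩ := D.mul_definable
  let τ : Fin 3 ⊕ Fin φ.m → Fin 2 ⊕ Fin (φ.m + 1) :=
    Sum.elim ![.inr 0, .inl 0, .inl 1] fun j => .inr j.succ
  refine ⟨⟨φ.m + 1, φ.toFormula.relabel τ, Fin.cons t φ.params⟩, ?_, fun x y => ?_⟩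
  · intro i
    refine Fin.cases ?_ (fun j => ?_) i
    · simp
    · simp [hφA j]
  · have hτ : Sum.elim ![x, y] (Fin.cons t φ.params) ∘ τ = Sum.elim ![t, x, y] φ.params := by
      funext w; rcases w with w | w
      · fin_cases w <;> rfl
      · simp [τ]
    simp only [ParamFormula.Realize, Language.Formula.realize_relabel]
    rw [hτ, ← ParamFormula.Realize, hφ]

variable {D}

lemma inv_mul_mul_mul_left {t x y : M} (ht : t ∈ D.carrier) (hx : x ∈ D.carrier)
    (hy : y ∈ D.carrier) : D.mul (D.inv (D.mul t x)) (D.mul t y) = D.mul (D.inv x) y := by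
  have htx : D.mul t x ∈ D.carrier := D.mul_mem' _ ht _ hx
  have hxy : D.mul (D.inv x) y ∈ D.carrier := D.mul_mem' _ (D.inv_mem' _ hx) _ hy
  have key : D.mul t y = D.mul (D.mul t x) (D.mul (D.inv x) y) := by
    rw [D.mul_assoc' _ ht _ hx _ hxy, ← D.mul_assoc' _ hx _ (D.inv_mem' _ hx) _ hy,
      D.mul_inv' _ hx, D.one_mul' _ hy]
  rw [key, ← D.mul_assoc' _ (D.inv_mem' _ htx) _ htx _ hxy, D.inv_mul' _ htx, D.one_mul' _ hxy]

lemma IsSubgroup.foldr_mul_mem_s5 {H : Set M} (hH : D.IsSubgroup H) :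
    ∀ l : List M, (∀ x ∈ l, x ∈ H) → l.foldr D.mul D.one ∈ H
  | [], _ => hH.2.1
  | a :: l, h => hH.2.2.1 _ (h a List.mem_cons_self) _
      (IsSubgroup.foldr_mul_mem_s5 hH l fun x hx => h x (List.mem_cons_of_mem a hx))

lemma qSet_subset {Γ : Set (ParamFormula L M 1)} {H : Set M} (hH : D.IsSubgroup H)
    (hΓ : ∀ d₁ ∈ D.carrier, ∀ d₂ ∈ D.carrier,
      (∀ f ∈ Γ, (f.Realize fun _ => d₁) ↔ f.Realize fun _ => d₂) → D.mul (D.inv d₁) d₂ ∈ H)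
    (n : ℕ) : D.qSet Γ n ⊆ H := by
  rintro _ ⟨d, hd, hdΓ, rfl⟩
  refine hH.foldr_mul_mem_s5 _ fun x hx => ?_
  obtain ⟨ℓ, rfl⟩ := List.mem_ofFn.mp hx
  exact hΓ _ (hd ℓ).1 _ (hd ℓ).2 (hdΓ ℓ)

lemma mul_left_mem_iUnion_of_realize_iff {ι : Type*} {P : ι → Set (ParamFormula L M 1)}
    {B : Set M} (hP : ∀ i, IsTypeOver (P i) B) (hAB : D.AStar ⊆ B) {t d₁ d₂ : M} (ht : t ∈ B)
    (hd : ∀ f : ParamFormula L M 1, f.paramsIn B →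
      ((f.Realize fun _ => d₁) ↔ f.Realize fun _ => d₂))
    (h₁ : D.mul t d₁ ∈ ⋃ i, realizeSet (P i)) : D.mul t d₂ ∈ ⋃ i, realizeSet (P i) := by
  obtain ⟨i, hi⟩ := mem_iUnion.mp h₁
  refine mem_iUnion.mpr ⟨i, fun f hf => ?_⟩
  obtain ⟨ψ, hψ, hψf⟩ := (D.definableFun_mul_left t).exists_realize_comp f
  have hψB : ψ.paramsIn B := fun j => by
    rcases hψ j with (hA | rfl) | ⟨k, hk⟩
    · exact hAB hA
    · exact ht
    · exact hk ▸ hP i f hf k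
  exact (hψf d₂).mp ((hd ψ hψB).mp ((hψf d₁).mpr (hi f hf)))

lemma inv_mul_mem_of_realize_iff {ι : Type*} {P : ι → Set (ParamFormula L M 1)}
    {H B S : Set M} (hH : D.IsSubgroup H) (hHP : H = ⋃ i, realizeSet (P i))
    (hP : ∀ i, IsTypeOver (P i) B) (hS : S ⊆ D.carrier)
    (hcov : ∀ g ∈ D.carrier, ∃ s ∈ S, D.mul (D.inv s) g ∈ H) (hAB : D.AStar ⊆ B)
    (hSB : D.inv '' S ⊆ B) {d₁ d₂ : M} (h₁ : d₁ ∈ D.carrier) (h₂ : d₂ ∈ D.carrier)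
    (hd : ∀ f : ParamFormula L M 1, f.paramsIn B →
      ((f.Realize fun _ => d₁) ↔ f.Realize fun _ => d₂)) :
    D.mul (D.inv d₁) d₂ ∈ H := by
  obtain ⟨s, hsS, hs₁⟩ := hcov d₁ h₁
  have hs₂ : D.mul (D.inv s) d₂ ∈ H := by
    rw [hHP] at hs₁ ⊢
    exact mul_left_mem_iUnion_of_realize_iff hP hAB (hSB (mem_image_of_mem _ hsS)) hd hs₁
  rw [← inv_mul_mul_mul_left (D.inv_mem' _ (hS hsS)) h₁ h₂]
  exact hH.2.2.1 _ (hH.2.2.2 _ hs₁) _ hs₂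

end DefGroup

theorem corollary_h1321_general
    {L : FirstOrder.Language.{u, u}} {M : Type u} [L.Structure M]
    (κbar : Cardinal.{u}) (hκinacc : κbar.IsInaccessible)
    (D : DefGroup L M) (hAκ : #(D.AStar) < κbar)
    (H : Set M) (hH : D.IsSubgroup H)
    (hdef : UnionTypeDefinable L H κbar) (hidx : D.indexLT H κbar) :
    ∃ (β : Type u) (a : β → M), #β < κbar ∧ D.AStar ⊆ Set.range a ∧
      (⋃ n : ℕ, D.qTupleSet a n) ⊆ H := by
  obtain ⟨B₀, hB₀, ι, -, P, hP, hHP⟩ := hdef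
  obtain ⟨S, hS, hSκ, hcov⟩ := hidx
  let B : Set M := D.AStar ∪ B₀ ∪ D.inv '' S
  have hℵ₀ : ℵ₀ ≤ κbar := hκinacc.aleph0_lt.le
  have hBκ : #B < κbar := (mk_union_le _ _).trans_lt <|
    add_lt_of_lt hℵ₀ ((mk_union_le _ _).trans_lt (add_lt_of_lt hℵ₀ hAκ hB₀))
      (mk_image_le.trans_lt hSκ)
  refine ⟨B, Subtype.val, hBκ, ?_, iUnion_subset fun n => ?_⟩
  · rw [Subtype.range_coe]
    exact subset_union_left.trans subset_union_left
  · refine DefGroup.qSet_subset hH (fun d₁ h₁ d₂ h₂ hd => ?_) n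
    refine DefGroup.inv_mul_mem_of_realize_iff hH hHP
      (fun i f hf j => subset_union_right.trans subset_union_left (hP i f hf j)) hS hcov
      (subset_union_left.trans subset_union_left) subset_union_right h₁ h₂ fun f hf => hd f ?_
    rwa [Subtype.range_coe]

/-- Corollary 1.8 of [Sh:886]: any union-type-definable subgroup of `G` of bounded index
contains a subgroup of the form `⋃_{n<ω} q^n_{ā}(𝔠)` for some `ā ∈ ^{κ̄>}𝔠` with
`A* ⊆ Rang(ā)`. -/
theorem corollary_h1321
    {L : FirstOrder.Language.{u, u}} {M : Type u} [L.Structure M]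
    (κbar : Cardinal.{u}) (hκinacc : κbar.IsInaccessible) (hκT : theoryCard L < κbar)
    (hκsat : Saturated L M κbar)
    (D : DefGroup L M) (hAκ : #(D.AStar) < κbar)
    (H : Set M) (hH : D.IsSubgroup H)
    (hdef : UnionTypeDefinable L H κbar) (hidx : D.indexLT H κbar) :
    ∃ (β : Type u) (a : β → M), #β < κbar ∧ D.AStar ⊆ Set.range a ∧
      (⋃ n : ℕ, D.qTupleSet a n) ⊆ H :=
  corollary_h1321_general κbar hκinacc D hAκ H hH hdef hidx

end Paper886
end
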